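/- Given the shift data of a fully polarized LG-algebra, the relation ⸧ ⊆ P̊ × N̊ (defined from ⪌, ⪯, ⪷ by cases) is a weakening relation from the collage order on P̊ = P ⊕ Ṗ induced by ⪌ʳ to the collage order on N̊ = N ⊕ Ṅ induced by ⪅ᵇ (where in N̊ the shifted elements Ṅ sit below the pure elements N, via inr ṅ ≤ inl n iff ṅ ⪅ᵇ n). -/

import Mathlib

/-- A weakening relation from an ordered set `(α, leA)` to an ordered set `(β, leB)`. -/
def IsWeakeningBetween {α β : Type*} (leA : α → α → Prop) (leB : β → β → Prop)
    (R : α → β → Prop) : Prop :=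
  ∀ ⦃a' a b b'⦄, leA a' a → R a b → leB b b' → R a' b'

/-- The shift data of a fully polarized LG-algebra: four posets `P`, `Ṗ` (`Pd`),
`N`, `Ṅ` (`Nd`), adjoint pairs of monotone shift maps `↑ ⊣ ⫞` and `↿ ⊣ ↓`, and
three weakening relations `⪌ʳ` (`gtr : P → Ṗ`), `⪯` (`prec : P → N`) and
`⪅ᵇ` (`lesb : Ṅ → N`) with `↑p ⪅ᵇ n ↔ p ⪯ n ↔ p ⪌ʳ ↓n`. -/
structure ShiftData (P Pd N Nd : Type*) [PartialOrder P] [PartialOrder Pd]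
    [PartialOrder N] [PartialOrder Nd] where
  /-- `↑ : P → Ṅ` -/
  up : P → Nd
  /-- `⫞ : Ṅ → P` -/
  corner : Nd → P
  /-- `↿ : Ṗ → N` -/
  upl : Pd → N
  /-- `↓ : N → Ṗ` -/
  down : N → Pd
  up_mono : Monotone up
  corner_mono : Monotone corner
  upl_mono : Monotone upl
  down_mono : Monotone down
  /-- the adjunction `↑ ⊣ ⫞` -/
  up_adj : ∀ (p : P) (nd : Nd), up p ≤ nd ↔ p ≤ corner nd
  /-- the adjunction `↿ ⊣ ↓` -/
  upl_adj : ∀ (pd : Pd) (n : N), upl pd ≤ n ↔ pd ≤ down n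
  /-- `⪌ʳ : P → Ṗ` -/
  gtr : P → Pd → Prop
  /-- `⪯ : P → N` -/
  prec : P → N → Prop
  /-- `⪅ᵇ : Ṅ → N` -/
  lesb : Nd → N → Prop
  gtr_wk : IsWeakeningBetween (· ≤ ·) (· ≤ ·) gtr
  prec_wk : IsWeakeningBetween (· ≤ ·) (· ≤ ·) prec
  lesb_wk : IsWeakeningBetween (· ≤ ·) (· ≤ ·) lesb
  /-- `↑p ⪅ᵇ n ↔ p ⪯ n` -/
  lesb_up_iff_prec : ∀ (p : P) (n : N), lesb (up p) n ↔ prec p n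
  /-- `p ⪯ n ↔ p ⪌ʳ ↓n` -/
  prec_iff_gtr_down : ∀ (p : P) (n : N), prec p n ↔ gtr p (down n)

variable {P Pd N Nd : Type*} [PartialOrder P] [PartialOrder Pd]
  [PartialOrder N] [PartialOrder Nd]

/-- The represented relation `⪌ : P → Ṅ`, `p ⪌ ṅ ↔ ↑p ⩿_Ṅ ṅ`. -/
def ShiftData.gles (S : ShiftData P Pd N Nd) (p : P) (nd : Nd) : Prop := S.up p ≤ nd

/-- The represented relation `⪷ : Ṗ → N`, `ṗ ⪷ n ↔ ṗ ⩿_Ṗ ↓n`. -/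
def ShiftData.pres (S : ShiftData P Pd N Nd) (pd : Pd) (n : N) : Prop := pd ≤ S.down n

/-- The relation `⸧ : P̊ → N̊` with `P̊ = P ⊕ Ṗ` and `N̊ = N ⊕ Ṅ`, defined by cases
from `⪯`, `⪌` and `⪷` (and never holding between two shifted elements). -/
def ShiftData.tack (S : ShiftData P Pd N Nd) : P ⊕ Pd → N ⊕ Nd → Prop
  | Sum.inl p, Sum.inl n => S.prec p n
  | Sum.inl p, Sum.inr nd => S.gles p nd
  | Sum.inr pd, Sum.inl n => S.pres pd n
  | Sum.inr _, Sum.inr _ => False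

/-- The collage order on `P̊ = P ⊕ Ṗ` induced by `⪌ʳ` (pure elements below shifted). -/
def ShiftData.collageP (S : ShiftData P Pd N Nd) : P ⊕ Pd → P ⊕ Pd → Prop
  | Sum.inl p, Sum.inl p' => p ≤ p'
  | Sum.inl p, Sum.inr pd => S.gtr p pd
  | Sum.inr pd, Sum.inr pd' => pd ≤ pd'
  | Sum.inr _, Sum.inl _ => False

/-- The collage order on `N̊ = N ⊕ Ṅ` induced by `⪅ᵇ` (shifted elements below pure). -/
def ShiftData.collageN (S : ShiftData P Pd N Nd) : N ⊕ Nd → N ⊕ Nd → Prop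
  | Sum.inl n, Sum.inl n' => n ≤ n'
  | Sum.inr nd, Sum.inl n => S.lesb nd n
  | Sum.inr nd, Sum.inr nd' => nd ≤ nd'
  | Sum.inl _, Sum.inr _ => False

theorem isWeakeningBetween_le_of_monotone {α β : Type*} [Preorder α] [Preorder β]
    {f : α → β} (hf : Monotone f) :
    IsWeakeningBetween (· ≤ ·) (· ≤ ·) (fun a b => f a ≤ b) :=
  fun _ _ _ _ ha hab hb => (hf ha).trans (hab.trans hb)

theorem isWeakeningBetween_le_comp_of_monotone {α β : Type*} [Preorder α] [Preorder β]
    {g : β → α} (hg : Monotone g) :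
    IsWeakeningBetween (· ≤ ·) (· ≤ ·) (fun a b => a ≤ g b) :=
  fun _ _ _ _ ha hab hb => ha.trans (hab.trans (hg hb))

namespace ShiftData

variable (S : ShiftData P Pd N Nd)

theorem gles_wk : IsWeakeningBetween (· ≤ ·) (· ≤ ·) S.gles :=
  isWeakeningBetween_le_of_monotone S.up_mono

theorem pres_wk : IsWeakeningBetween (· ≤ ·) (· ≤ ·) S.pres :=
  isWeakeningBetween_le_comp_of_monotone S.down_mono

variable {S}

theorem prec_of_gles_of_lesb {p : P} {nd : Nd} {n : N} (h₁ : S.gles p nd)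
    (h₂ : S.lesb nd n) : S.prec p n :=
  (S.lesb_up_iff_prec p n).mp (S.lesb_wk h₁ h₂ le_rfl)

theorem prec_of_gtr_of_pres {p : P} {pd : Pd} {n : N} (h₁ : S.gtr p pd)
    (h₂ : S.pres pd n) : S.prec p n :=
  (S.prec_iff_gtr_down p n).mpr (S.gtr_wk le_rfl h₁ h₂)

end ShiftData

/-- `⸧` is a weakening relation from the collage order on `P̊` induced by `⪌ʳ` to the
collage order on `N̊` induced by `⪅ᵇ`. -/
theorem stmt5 (S : ShiftData P Pd N Nd) :
    IsWeakeningBetween S.collageP S.collageN S.tack := by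
  -- `simp only` discards the 27 case combinations in which a collage order or `tack` is `False`
  rintro (p' | pd') (p | pd) (n | nd) (n' | nd') hA hR hB <;>
    simp only [ShiftData.collageP, ShiftData.collageN, ShiftData.tack] at hA hR hB ⊢
  · exact S.prec_wk hA hR hB
  · exact ShiftData.prec_of_gles_of_lesb (S.gles_wk hA hR le_rfl) hB
  · exact S.gles_wk hA hR hB
  · exact ShiftData.prec_of_gtr_of_pres hA (S.pres_wk le_rfl hR hB)
  · exact S.pres_wk hA hR hB
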